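/- arXiv:2304.07667 — 5 statements merged into one kernel-verified Lean document; each statement's English description precedes it below -/
import Mathlib

section
/- For all x ∈ [0,1]: I_{011}(x) ≥ I_{10}(x), where I_{011} = I₁ ∘ I₁ ∘ I₀ and I_{10} = I₀ ∘ I₁. -/
/-- `I₀(x) = x²` -/
def I0 (x : ℝ) : ℝ := x ^ 2

/-- `I₁(x) = 1 - (1-x)²` -/
def I1 (x : ℝ) : ℝ := 1 - (1 - x) ^ 2

/-- The function associated to one bit: `true ↦ I₁`, `false ↦ I₀`. -/
def If2 (b : Bool) : ℝ → ℝ := fun x => if b then I1 x else I0 x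

/-- For a binary string `b = b₁⋯bₙ`, apply `I_{b₁}` first, then `I_{b₂}`, etc. -/
def Ibin (b : List Bool) (x : ℝ) : ℝ := b.foldl (fun y c => If2 c y) x

/-- `a ≽ b` iff `I_a(x) ≥ I_b(x)` for all `x ∈ [0,1]`. -/
def geB (a b : List Bool) : Prop := ∀ x ∈ Set.Icc (0:ℝ) 1, Ibin a x ≥ Ibin b x

theorem rule_011_ge_10 :
    ∀ x ∈ Set.Icc (0:ℝ) 1,
      Ibin [false, true, true] x ≥ Ibin [true, false] x := by
  rintro x ⟨h0, h1⟩
  simp only [Ibin, List.foldl, If2, I0, I1]; norm_num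
  nlinarith [sq_nonneg x, sq_nonneg (1-x), sq_nonneg (x*(1-x)), sq_nonneg (x^2*(1-x)), sq_nonneg (x*(1-x)^2), sq_nonneg (x^2-x+1), mul_nonneg h0 (sub_nonneg.2 h1), sq_nonneg (x^2*(1-x)^2)]
end

section
/- For all x ∈ [0,1]: I_{1001}(x) ≥ I_{0110}(x). -/
theorem rule_1001_ge_0110 :
    ∀ x ∈ Set.Icc (0:ℝ) 1,
      Ibin [true, false, false, true] x ≥ Ibin [false, true, true, false] x := by
  rintro x ⟨h0, h1⟩
  have hx1 : (0:ℝ) ≤ 1 - x := by linarith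
  have ht0 : 0 ≤ x * (1 - x) := mul_nonneg h0 hx1
  have ht1 : x * (1 - x) ≤ 1 / 4 := by nlinarith [sq_nonneg (1 - 2 * x)]
  have hp : 0 ≤ 16 + 48 * (x * (1 - x)) ^ 3 - 2 * (x * (1 - x)) ^ 4 := by
    nlinarith [pow_nonneg ht0 3, pow_le_pow_left₀ ht0 ht1 4]
  have hpow : 0 ≤ x ^ 4 * (1 - x) ^ 4 := by positivity
  have key : Ibin [true, false, false, true] x - Ibin [false, true, true, false] x
      = x ^ 4 * (1 - x) ^ 4 *
        (16 + 48 * (x * (1 - x)) ^ 3 - 2 * (x * (1 - x)) ^ 4) := by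
    simp only [Ibin, List.foldl, If2, I0, I1]
    norm_num
    ring
  nlinarith [mul_nonneg hpow hp]
end

section
/- Define α ⊵ β (prefix TBM relation on quaternary strings) to mean: for all quaternary strings y, z, if αy ≽ βz then α0y ≽ β0z and α1y ≽ β1z. Then α ⊵ β holds if and only if both α0α⁻¹ ≽ β0β⁻¹ and α1α⁻¹ ≽ β1β⁻¹ hold. -/
/-- `I₀(x)=x²`, `I₁(x)=1-(1-x)²`, `I₂(x)=√x`, `I₃(x)=1-√(1-x)`. -/
noncomputable def If4 (q : Fin 4) : ℝ → ℝ := fun x =>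
  if q = 0 then x ^ 2
  else if q = 1 then 1 - (1 - x) ^ 2
  else if q = 2 then Real.sqrt x
  else 1 - Real.sqrt (1 - x)

/-- For a quaternary string `q = q₁⋯qₙ`, apply `I_{q₁}` first, then `I_{q₂}`, etc. -/
noncomputable def Iquat (q : List (Fin 4)) (x : ℝ) : ℝ := q.foldl (fun y c => If4 c y) x

/-- The formal inverse string: reversal with `0↔2`, `1↔3` swapped. -/
def qinv (q : List (Fin 4)) : List (Fin 4) := (q.map (· + 2)).reverse

/-- `p ≽ q` iff `I_p(x) ≥ I_q(x)` for all `x ∈ [0,1]`. -/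
def geQ (p q : List (Fin 4)) : Prop := ∀ x ∈ Set.Icc (0:ℝ) 1, Iquat p x ≥ Iquat q x

/-- The prefix TBM relation `α ⊵ β`. -/
def tbm (α β : List (Fin 4)) : Prop :=
  ∀ y z : List (Fin 4), geQ (α ++ y) (β ++ z) →
    geQ (α ++ [0] ++ y) (β ++ [0] ++ z) ∧ geQ (α ++ [1] ++ y) (β ++ [1] ++ z)

lemma If4_mem (c : Fin 4) {x : ℝ} (hx : x ∈ Set.Icc (0:ℝ) 1) :
    If4 c x ∈ Set.Icc (0:ℝ) 1 := by
  obtain ⟨h0, h1⟩ := hx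
  fin_cases c
  · show x ^ 2 ∈ Set.Icc (0:ℝ) 1
    exact ⟨by positivity, by nlinarith⟩
  · show 1 - (1 - x) ^ 2 ∈ Set.Icc (0:ℝ) 1
    exact ⟨by nlinarith, by nlinarith⟩
  · show Real.sqrt x ∈ Set.Icc (0:ℝ) 1
    exact ⟨Real.sqrt_nonneg x, Real.sqrt_le_one.mpr h1⟩
  · show 1 - Real.sqrt (1 - x) ∈ Set.Icc (0:ℝ) 1
    have hs0 := Real.sqrt_nonneg (1 - x)
    have hs1 : Real.sqrt (1 - x) ≤ 1 := Real.sqrt_le_one.mpr (by linarith)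
    exact ⟨by linarith, by linarith⟩

lemma If4_mono (c : Fin 4) {x y : ℝ} (hx : x ∈ Set.Icc (0:ℝ) 1)
    (hy : y ∈ Set.Icc (0:ℝ) 1) (hxy : x ≤ y) : If4 c x ≤ If4 c y := by
  obtain ⟨hx0, hx1⟩ := hx
  obtain ⟨hy0, hy1⟩ := hy
  fin_cases c
  · show x ^ 2 ≤ y ^ 2
    nlinarith
  · show 1 - (1 - x) ^ 2 ≤ 1 - (1 - y) ^ 2
    nlinarith
  · exact Real.sqrt_le_sqrt hxy
  · show 1 - Real.sqrt (1 - x) ≤ 1 - Real.sqrt (1 - y)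
    have := Real.sqrt_le_sqrt (show (1:ℝ) - y ≤ 1 - x by linarith)
    linarith

lemma If4_inv (c : Fin 4) {x : ℝ} (hx : x ∈ Set.Icc (0:ℝ) 1) :
    If4 (c + 2) (If4 c x) = x := by
  obtain ⟨h0, h1⟩ := hx
  fin_cases c
  · show Real.sqrt (x ^ 2) = x
    rw [Real.sqrt_sq h0]
  · show 1 - Real.sqrt (1 - (1 - (1 - x) ^ 2)) = x
    rw [show (1:ℝ) - (1 - (1 - x) ^ 2) = (1 - x) ^ 2 by ring,
      Real.sqrt_sq (by linarith)]
    ring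
  · show Real.sqrt x ^ 2 = x
    exact Real.sq_sqrt h0
  · show 1 - (1 - (1 - Real.sqrt (1 - x))) ^ 2 = x
    have hs : Real.sqrt (1 - x) ^ 2 = 1 - x := Real.sq_sqrt (by linarith)
    nlinarith [hs]

lemma Iquat_cons (c : Fin 4) (q : List (Fin 4)) (x : ℝ) :
    Iquat (c :: q) x = Iquat q (If4 c x) := rfl

lemma Iquat_append (p q : List (Fin 4)) (x : ℝ) :
    Iquat (p ++ q) x = Iquat q (Iquat p x) := by
  simp [Iquat, List.foldl_append]

lemma Iquat_append3 (p q : List (Fin 4)) (c : Fin 4) (x : ℝ) :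
    Iquat (p ++ [c] ++ q) x = Iquat q (If4 c (Iquat p x)) := by
  rw [Iquat_append, Iquat_append]; rfl

lemma Iquat_mem (q : List (Fin 4)) {x : ℝ} (hx : x ∈ Set.Icc (0:ℝ) 1) :
    Iquat q x ∈ Set.Icc (0:ℝ) 1 := by
  induction q generalizing x with
  | nil => exact hx
  | cons c q ih => rw [Iquat_cons]; exact ih (If4_mem c hx)

lemma Iquat_mono (q : List (Fin 4)) {x y : ℝ} (hx : x ∈ Set.Icc (0:ℝ) 1)
    (hy : y ∈ Set.Icc (0:ℝ) 1) (hxy : x ≤ y) : Iquat q x ≤ Iquat q y := by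
  induction q generalizing x y with
  | nil => exact hxy
  | cons c q ih =>
    rw [Iquat_cons, Iquat_cons]
    exact ih (If4_mem c hx) (If4_mem c hy) (If4_mono c hx hy hxy)

lemma qinv_cons (c : Fin 4) (q : List (Fin 4)) :
    qinv (c :: q) = qinv q ++ [c + 2] := by simp [qinv]

lemma Iquat_inv (q : List (Fin 4)) {x : ℝ} (hx : x ∈ Set.Icc (0:ℝ) 1) :
    Iquat (qinv q) (Iquat q x) = x := by
  induction q generalizing x with
  | nil => rfl
  | cons c q ih =>
    rw [qinv_cons, Iquat_cons, Iquat_append, ih (If4_mem c hx)]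
    exact If4_inv c hx

lemma qinv_qinv (q : List (Fin 4)) : qinv (qinv q) = q := by
  have h : ∀ c : Fin 4, c + 2 + 2 = c := by decide
  simp [qinv, List.map_reverse, List.map_map, Function.comp, h]

lemma Iquat_inv' (q : List (Fin 4)) {x : ℝ} (hx : x ∈ Set.Icc (0:ℝ) 1) :
    Iquat q (Iquat (qinv q) x) = x := by
  have := Iquat_inv (qinv q) hx
  rwa [qinv_qinv] at this

lemma step (α β y z : List (Fin 4)) (c : Fin 4)
    (hc : geQ (α ++ [c] ++ qinv α) (β ++ [c] ++ qinv β))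
    (h : geQ (α ++ y) (β ++ z)) :
    geQ (α ++ [c] ++ y) (β ++ [c] ++ z) := by
  intro x hx
  rw [Iquat_append3, Iquat_append3]
  have hum : If4 c (Iquat α x) ∈ Set.Icc (0:ℝ) 1 := If4_mem c (Iquat_mem α hx)
  have hvm : If4 c (Iquat β x) ∈ Set.Icc (0:ℝ) 1 := If4_mem c (Iquat_mem β hx)
  have ht : Iquat (qinv β) (If4 c (Iquat β x)) ∈ Set.Icc (0:ℝ) 1 := Iquat_mem _ hvm
  have hst : Iquat (qinv α) (If4 c (Iquat α x)) ≥ Iquat (qinv β) (If4 c (Iquat β x)) := by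
    have := hc x hx
    rwa [Iquat_append3, Iquat_append3] at this
  have hβt : Iquat β (Iquat (qinv β) (If4 c (Iquat β x))) = If4 c (Iquat β x) :=
    Iquat_inv' β hvm
  have hαt : Iquat α (Iquat (qinv β) (If4 c (Iquat β x))) ≤ If4 c (Iquat α x) := by
    calc Iquat α (Iquat (qinv β) (If4 c (Iquat β x)))
        ≤ Iquat α (Iquat (qinv α) (If4 c (Iquat α x))) :=
          Iquat_mono α ht (Iquat_mem _ hum) hst
      _ = If4 c (Iquat α x) := Iquat_inv' α hum
  have h1 := h (Iquat (qinv β) (If4 c (Iquat β x))) ht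
  rw [Iquat_append, Iquat_append, hβt] at h1
  calc Iquat z (If4 c (Iquat β x))
      ≤ Iquat y (Iquat α (Iquat (qinv β) (If4 c (Iquat β x)))) := h1
    _ ≤ Iquat y (If4 c (Iquat α x)) :=
        Iquat_mono y (Iquat_mem α ht) hum hαt

theorem tbm_iff (α β : List (Fin 4)) :
    tbm α β ↔
      geQ (α ++ [0] ++ qinv α) (β ++ [0] ++ qinv β) ∧
      geQ (α ++ [1] ++ qinv α) (β ++ [1] ++ qinv β) := by
  constructor
  · intro h
    have key : geQ (α ++ qinv α) (β ++ qinv β) := by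
      intro x hx
      rw [Iquat_append, Iquat_append, Iquat_inv α hx, Iquat_inv β hx]
    exact h (qinv α) (qinv β) key
  · rintro ⟨h0, h1⟩ y z hyz
    exact ⟨step α β y z 0 h0 hyz, step α β y z 1 h1 hyz⟩
end

section
/- For all x ∈ [0,1]: I_{10023}(x) ≥ I_{01032}(x), i.e., I₃(I₂(I₀(I₀(I₁(x))))) ≥ I₂(I₃(I₀(I₁(I₀(x))))), where I₀(x)=x², I₁(x)=1-(1-x)², I₂(x)=√x, I₃(x)=1-√(1-x). -/
lemma aux_le_of_sq_le_sq (r s : ℝ) (h : r^2 ≤ s^2) (hs : 0 ≤ s) : r ≤ s := by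
  nlinarith [sq_nonneg (s - r), sq_nonneg (s + r)]

theorem rule_10023_ge_01032 :
    ∀ x ∈ Set.Icc (0:ℝ) 1,
      Iquat [1, 0, 0, 2, 3] x ≥ Iquat [0, 1, 0, 3, 2] x := by
  rintro x ⟨hx0, hx1⟩
  show Real.sqrt (1 - Real.sqrt (1 - ((1 - (1 - x^2)^2)^2))) ≤
    1 - Real.sqrt (1 - Real.sqrt (((1-(1-x)^2)^2)^2))
  set a : ℝ := 1 - (1-x)^2 with ha
  set c : ℝ := 1 - (1-x^2)^2 with hc
  have ha0 : 0 ≤ a := by nlinarith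
  have ha1 : a ≤ 1 := by nlinarith
  have hc0 : 0 ≤ c := by nlinarith
  have hc1 : c ≤ 1 := by nlinarith
  have hsq : Real.sqrt ((a^2)^2) = a^2 := Real.sqrt_sq (sq_nonneg a)
  rw [hsq]
  set A : ℝ := Real.sqrt (1 - a^2) with hA
  set B : ℝ := Real.sqrt (1 - c^2) with hB
  have hua : (0:ℝ) ≤ 1 - a^2 := by nlinarith
  have huc : (0:ℝ) ≤ 1 - c^2 := by nlinarith
  have hA0 : 0 ≤ A := Real.sqrt_nonneg _
  have hB0 : 0 ≤ B := Real.sqrt_nonneg _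
  have hA2 : A^2 = 1 - a^2 := Real.sq_sqrt hua
  have hB2 : B^2 = 1 - c^2 := Real.sq_sqrt huc
  have hA1 : A ≤ 1 := by
    calc A ≤ Real.sqrt 1 := Real.sqrt_le_sqrt (by nlinarith)
    _ = 1 := Real.sqrt_one
  clear_value a c A B
  clear hA hB hsq
  -- key polynomial inequality
  have hg : (0:ℝ) ≤ 8 + 16*x - 8*x^2 + 8*x^3 - 9*x^4 + 2*x^5 - x^6 := by nlinarith
  have hkey : ((1-a^2)*(5-a^2) - (1-c^2))^2 ≤ 16*(1-a^2)^3 := by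
    have hfac : 16*(1-a^2)^3 - ((1-a^2)*(5-a^2) - (1-c^2))^2
        = 4*x^4*(1-x)^6*(8 + 16*x - 8*x^2 + 8*x^3 - 9*x^4 + 2*x^5 - x^6) := by
      rw [ha, hc]; ring
    nlinarith [mul_nonneg (mul_nonneg (mul_nonneg (by norm_num : (0:ℝ) ≤ 4)
      (pow_nonneg hx0 4)) (pow_nonneg (by linarith : (0:ℝ) ≤ 1 - x) 6)) hg]
  have hS0 : 0 ≤ 4*(1-a^2)*A := by positivity
  have hR : (1-a^2)*(5-a^2) - (1-c^2) ≤ 4*(1-a^2)*A := by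
    have hS2 : (4*(1-a^2)*A)^2 = 16*(1-a^2)^3 := by
      have : (4*(1-a^2)*A)^2 = 16*(1-a^2)^2*A^2 := by ring
      rw [this, hA2]; ring
    exact aux_le_of_sq_le_sq _ _ (by rw [hS2]; exact hkey) hS0
  -- A*(2-A) ≤ B
  have e3 : A^3 = (1-a^2)*A := by
    calc A^3 = A^2 * A := by ring
    _ = (1-a^2)*A := by rw [hA2]
  have e4 : A^4 = (1-a^2)^2 := by
    calc A^4 = (A^2)^2 := by ring
    _ = (1-a^2)^2 := by rw [hA2]
  have hAB : A*(2-A) ≤ B := by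
    apply aux_le_of_sq_le_sq _ _ _ hB0
    rw [hB2]
    nlinarith [hR, e3, e4, hA2]
  -- conclude
  have h1A : 0 ≤ 1 - A := by linarith
  calc Real.sqrt (1 - B) ≤ Real.sqrt ((1-A)^2) := by
        apply Real.sqrt_le_sqrt; nlinarith
  _ = 1 - A := Real.sqrt_sq h1A
end

section
/- For every natural number m and all x ∈ [0,1]: I_{10 0^m 01}(x) ≥ I_{01 0^m 10}(x), where 0^m denotes m copies of the symbol 0. -/
/-- Key one-variable inequality (with an auxiliary square root): if `u² ≤ v²(2-v²)`
then `(u(2-u))² ≤ (v(2-v))²(2-(v(2-v))²)`. -/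
lemma key_ineq (u v : ℝ) (hu0 : 0 ≤ u) (hu1 : u ≤ 1) (hv0 : 0 ≤ v) (hv1 : v ≤ 1)
    (H : u ^ 2 ≤ v ^ 2 * (2 - v ^ 2)) :
    (u * (2 - u)) ^ 2 ≤ (v * (2 - v)) ^ 2 * (2 - (v * (2 - v)) ^ 2) := by
  set w := Real.sqrt (v ^ 2 * (2 - v ^ 2)) with hw
  have hWnn : 0 ≤ v ^ 2 * (2 - v ^ 2) := by nlinarith
  have hw2 : w ^ 2 = v ^ 2 * (2 - v ^ 2) := Real.sq_sqrt hWnn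
  have hw0 : 0 ≤ w := Real.sqrt_nonneg _
  have hw1 : w ≤ 1 := by nlinarith [sq_nonneg (1 - v ^ 2)]
  have huw : u ≤ w := by nlinarith
  have h1 : (u * (2 - u)) ^ 2 ≤ (w * (2 - w)) ^ 2 := by
    nlinarith [mul_nonneg hu0 (by linarith : (0:ℝ) ≤ 2 - u),
      mul_nonneg (by linarith : (0:ℝ) ≤ w - u) (by linarith : (0:ℝ) ≤ 2 - u - w)]
  have hL : (0:ℝ) ≤ 8*v^3 + 14*v^4 - 32*v^5 + 20*v^6 - 8*v^7 + 2*v^8 := by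
    nlinarith [pow_nonneg hv0 3, mul_nonneg (pow_nonneg hv0 3) (sub_nonneg.2 hv1),
      mul_nonneg (pow_nonneg hv0 4) (sub_nonneg.2 hv1), sq_nonneg (1-v),
      mul_nonneg (pow_nonneg hv0 5) (sub_nonneg.2 hv1),
      mul_nonneg (pow_nonneg hv0 6) (sub_nonneg.2 hv1)]
  have ha : (0:ℝ) ≤ 4 * (v ^ 2 * (2 - v ^ 2)) * w := by
    have : (0:ℝ) ≤ 2 - v^2 := by nlinarith
    positivity
  have hD : (4 * (v ^ 2 * (2 - v ^ 2)) * w) ^ 2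
      - (8*v^3 + 14*v^4 - 32*v^5 + 20*v^6 - 8*v^7 + 2*v^8) ^ 2
      = v^6 * (1-v)^4 * (64 + 32*v - 132*v^2 + 112*v^3 - 56*v^4 + 16*v^5 - 4*v^6) := by
    linear_combination (16 * v ^ 4 * (2 - v ^ 2) ^ 2) * hw2
  have hRpos : (0:ℝ) ≤ 64 + 32*v - 132*v^2 + 112*v^3 - 56*v^4 + 16*v^5 - 4*v^6 := by
    nlinarith [mul_nonneg hv0 (sub_nonneg.2 hv1), sq_nonneg v, sq_nonneg (1-v),
      mul_nonneg (mul_nonneg hv0 hv0) (sub_nonneg.2 hv1),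
      mul_nonneg (pow_nonneg hv0 3) (sub_nonneg.2 hv1),
      mul_nonneg (pow_nonneg hv0 4) (sub_nonneg.2 hv1),
      mul_nonneg (pow_nonneg hv0 5) (sub_nonneg.2 hv1)]
  have hDpos : (0:ℝ) ≤ (4 * (v ^ 2 * (2 - v ^ 2)) * w) ^ 2
      - (8*v^3 + 14*v^4 - 32*v^5 + 20*v^6 - 8*v^7 + 2*v^8) ^ 2 := by
    rw [hD]
    positivity
  have hkey : 8*v^3 + 14*v^4 - 32*v^5 + 20*v^6 - 8*v^7 + 2*v^8
      ≤ 4 * (v ^ 2 * (2 - v ^ 2)) * w := by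
    nlinarith [hDpos, ha, hL]
  have hexp : (w * (2 - w)) ^ 2
      = v ^ 2 * (2 - v ^ 2) * (4 + v ^ 2 * (2 - v ^ 2)) - 4 * (v ^ 2 * (2 - v ^ 2)) * w := by
    linear_combination (w ^ 2 - 4 * w + 4 + v ^ 2 * (2 - v ^ 2)) * hw2
  have h2 : (w * (2 - w)) ^ 2 ≤ (v * (2 - v)) ^ 2 * (2 - (v * (2 - v)) ^ 2) := by
    rw [hexp]; nlinarith [hkey]
  linarith

/-- The squaring step: if `(b(2-b))² ≤ a²(2-a²)` then the same with `a, b` squared. -/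
lemma step_ineq (a b : ℝ) (ha0 : 0 ≤ a) (ha1 : a ≤ 1) (hb0 : 0 ≤ b) (hb1 : b ≤ 1)
    (H : (b * (2 - b)) ^ 2 ≤ a ^ 2 * (2 - a ^ 2)) :
    (b ^ 2 * (2 - b ^ 2)) ^ 2 ≤ (a ^ 2) ^ 2 * (2 - (a ^ 2) ^ 2) := by
  have kk := key_ineq (1 - a ^ 2) (1 - b) (by nlinarith) (by nlinarith) (by linarith)
    (by linarith) (by nlinarith)
  nlinarith [kk]

/-- The base case `m = 0`. -/
lemma base_ineq (x : ℝ) (h0 : 0 ≤ x) (h1 : x ≤ 1) :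
    ((x ^ 2 * (2 - x ^ 2)) * (2 - x ^ 2 * (2 - x ^ 2))) ^ 2
      ≤ ((x * (2 - x)) ^ 2) ^ 2 * (2 - ((x * (2 - x)) ^ 2) ^ 2) := by
  have hR2 : (0:ℝ) ≤ 16 + 2 * x^3 * (1-x)^3 * (24 - x + x^2) := by
    have h24 : (0:ℝ) ≤ 24 - x + x^2 := by nlinarith
    have : (0:ℝ) ≤ 2 * x^3 * (1-x)^3 * (24 - x + x^2) := by
      have hx3 : (0:ℝ) ≤ x^3 := by positivity
      have h1x : (0:ℝ) ≤ (1-x)^3 := by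
        have : (0:ℝ) ≤ 1 - x := by linarith
        positivity
      positivity
    linarith
  nlinarith [mul_nonneg (mul_nonneg (pow_nonneg h0 4)
      (pow_nonneg (by linarith : (0:ℝ) ≤ 1 - x) 4)) hR2]

/-- The main inequality, by induction on `m`. -/
lemma main_ineq (x : ℝ) (h0 : 0 ≤ x) (h1 : x ≤ 1) (m : ℕ) :
    ((x ^ 2 * (2 - x ^ 2)) ^ 2 ^ m * (2 - (x ^ 2 * (2 - x ^ 2)) ^ 2 ^ m)) ^ 2
      ≤ (((x * (2 - x)) ^ 2 ^ m) ^ 2) ^ 2 * (2 - (((x * (2 - x)) ^ 2 ^ m) ^ 2) ^ 2) := by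
  induction m with
  | zero => simpa using base_ineq x h0 h1
  | succ m ih =>
    have hs0 : 0 ≤ x * (2 - x) := by nlinarith
    have hs1 : x * (2 - x) ≤ 1 := by nlinarith [sq_nonneg (1 - x)]
    have ht0 : 0 ≤ x ^ 2 * (2 - x ^ 2) := by nlinarith
    have ht1 : x ^ 2 * (2 - x ^ 2) ≤ 1 := by nlinarith [sq_nonneg (1 - x ^ 2)]
    have hA0 : 0 ≤ (x * (2 - x)) ^ 2 ^ m := pow_nonneg hs0 _
    have hA1 : (x * (2 - x)) ^ 2 ^ m ≤ 1 := pow_le_one₀ hs0 hs1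
    have hB0 : 0 ≤ (x ^ 2 * (2 - x ^ 2)) ^ 2 ^ m := pow_nonneg ht0 _
    have hB1 : (x ^ 2 * (2 - x ^ 2)) ^ 2 ^ m ≤ 1 := pow_le_one₀ ht0 ht1
    have hIH : ((x ^ 2 * (2 - x ^ 2)) ^ 2 ^ m * (2 - (x ^ 2 * (2 - x ^ 2)) ^ 2 ^ m)) ^ 2
        ≤ (((x * (2 - x)) ^ 2 ^ m) ^ 2) ^ 2
          * (2 - (((x * (2 - x)) ^ 2 ^ m) ^ 2) ^ 2) := ih
    have hst := step_ineq (((x * (2 - x)) ^ 2 ^ m) ^ 2) ((x ^ 2 * (2 - x ^ 2)) ^ 2 ^ m)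
      (by positivity) (by nlinarith) hB0 hB1 (by nlinarith [hIH])
    have e1 : (x * (2 - x)) ^ 2 ^ (m + 1) = ((x * (2 - x)) ^ 2 ^ m) ^ 2 := by
      rw [← pow_mul]; ring_nf
    have e2 : (x ^ 2 * (2 - x ^ 2)) ^ 2 ^ (m + 1) = ((x ^ 2 * (2 - x ^ 2)) ^ 2 ^ m) ^ 2 := by
      rw [← pow_mul]; ring_nf
    rw [e1, e2]
    convert hst using 2 <;> ring

/-- Iterating `I₀` `m` times is raising to the `2^m`-th power. -/
lemma Ibin_rep (m : ℕ) (y : ℝ) : Ibin (List.replicate m false) y = y ^ 2 ^ m := by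
  induction m generalizing y with
  | zero => simp [Ibin]
  | succ m ih =>
    rw [List.replicate_succ]
    show Ibin (List.replicate m false) (I0 y) = _
    rw [ih, I0, ← pow_mul]
    ring_nf

theorem rule_10_0m_01_ge_01_0m_10 (m : ℕ) :
    ∀ x ∈ Set.Icc (0:ℝ) 1,
      Ibin ([true, false] ++ List.replicate m false ++ [false, true]) x ≥
        Ibin ([false, true] ++ List.replicate m false ++ [true, false]) x := by
  intro x hx
  obtain ⟨h0, h1⟩ := hx
  have hL : Ibin ([true, false] ++ List.replicate m false ++ [false, true]) x
      = I1 (I0 (Ibin (List.replicate m false) (I0 (I1 x)))) := by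
    simp [Ibin, List.foldl_append, If2]
  have hR : Ibin ([false, true] ++ List.replicate m false ++ [true, false]) x
      = I0 (I1 (Ibin (List.replicate m false) (I1 (I0 x)))) := by
    simp [Ibin, List.foldl_append, If2]
  rw [hL, hR, Ibin_rep, Ibin_rep]
  have key := main_ineq x h0 h1 m
  have eI1 : I1 x = x * (2 - x) := by rw [I1]; ring
  have eI0 : ∀ y : ℝ, I0 y = y ^ 2 := fun y => rfl
  have eL : I1 (I0 ((I0 (I1 x)) ^ 2 ^ m))
      = (((x * (2 - x)) ^ 2 ^ m) ^ 2) ^ 2 * (2 - (((x * (2 - x)) ^ 2 ^ m) ^ 2) ^ 2) := by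
    rw [eI0, eI0, eI1, I1, ← pow_mul, ← pow_mul, ← pow_mul, ← pow_mul]
    ring_nf
  have eR : I0 (I1 ((I1 (I0 x)) ^ 2 ^ m))
      = ((x ^ 2 * (2 - x ^ 2)) ^ 2 ^ m * (2 - (x ^ 2 * (2 - x ^ 2)) ^ 2 ^ m)) ^ 2 := by
    have : I1 (I0 x) = x ^ 2 * (2 - x ^ 2) := by rw [I1, I0]; ring
    rw [this, I1, I0]
    ring_nf
  rw [ge_iff_le, eR, eL]
  exact key
end
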